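/- Slow equilibration, persistence part: let |ψ(t)⟩ be a pure state with energy standard deviation σ_E and effective dimension d_eff, let ε > 0, τ = 2ε/σ_E, and let P be the projector onto span{|ψ(jτ)⟩ : j = 0,...,K−1}. Then for all t ∈ [0, (K−1/2)τ], Tr(P ρ_t) ≥ 1 − ε², and hence D_P(ρ_t, ω) ≥ 1 − ε² − √(K/d_eff). -/

import Mathlib

/-!
Let `jτ` be the grid point nearest to `t` and `s = t - jτ`, so `|s| ≤ τ/2` and `σ_E² s² ≤ ε²`.
The overlap `⟨ψ(jτ)|ψ(t)⟩ = ∑ |c_j|² e^{-i E_j s}`, multiplied by the mean phase `e^{i μ s}`,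
has real part `∑ |c_j|² cos((μ - E_j) s) ≥ 1 - σ_E² s² / 2`, hence squared norm at least
`1 - σ_E² s²`. Since `P` is an orthogonal projection fixing `ψ(jτ)`, Cauchy–Schwarz gives
`|⟨ψ(jτ)|ψ(t)⟩|² ≤ ⟨ψ(t)|P|ψ(t)⟩ = Tr(P ρ_t)`. Cauchy–Schwarz for the Hilbert–Schmidt pairing
gives `|Tr(P ω)|² ≤ Tr(P²) Tr(ω²) = rank P · Tr(ω²) ≤ K / d_eff`, and the triangle inequality
finishes the second bound.
-/

open Matrix Complex

lemma one_sub_le_sq_of_one_sub_half_le {a x : ℝ} (h : 1 - x / 2 ≤ a) :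
    1 - x ≤ a ^ 2 := by
  rcases le_or_gt 0 (1 - x / 2) with hx | hx
  · nlinarith [pow_le_pow_left₀ hx h 2, sq_nonneg x]
  · nlinarith [sq_nonneg a]

lemma exists_nat_lt_abs_sub_le_half {K : ℕ} {x : ℝ} (hx0 : 0 ≤ x) (hxK : x ≤ K - 1 / 2) :
    ∃ j < K, |x - j| ≤ 1 / 2 := by
  rcases le_or_gt (1 / 2) x with hx | hx
  · have hle := Nat.le_ceil (x - 1 / 2)
    have hlt := Nat.ceil_lt_add_one (sub_nonneg.2 hx)
    refine ⟨⌈x - 1 / 2⌉₊, ?_, abs_le.2 ⟨by linarith, by linarith⟩⟩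
    exact_mod_cast (by linarith : (⌈x - 1 / 2⌉₊ : ℝ) < K)
  · refine ⟨0, ?_, abs_le.2 ⟨by simp; linarith, by simp; linarith⟩⟩
    exact_mod_cast (by linarith : (0 : ℝ) < K)

lemma exists_nat_lt_abs_sub_mul_le_half {K : ℕ} {τ t : ℝ} (hτ : 0 < τ) (ht0 : 0 ≤ t)
    (htK : t ≤ (K - 1 / 2) * τ) : ∃ j < K, |t - j * τ| ≤ τ / 2 := by
  obtain ⟨j, hjK, hj⟩ := exists_nat_lt_abs_sub_le_half (div_nonneg ht0 hτ.le)
    ((div_le_iff₀ hτ).2 htK)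
  refine ⟨j, hjK, ?_⟩
  have : t - j * τ = τ * (t / τ - j) := by field_simp
  rw [this, abs_mul, abs_of_pos hτ]
  linarith [mul_le_mul_of_nonneg_left hj hτ.le]

section

variable {ι : Type*} [Fintype ι]

lemma norm_sum_mul_sq_le (f g : ι → ℂ) :
    ‖∑ i, f i * g i‖ ^ 2 ≤ (∑ i, ‖f i‖ ^ 2) * ∑ i, ‖g i‖ ^ 2 := by
  have h : ‖∑ i, f i * g i‖ ≤ ∑ i, ‖f i‖ * ‖g i‖ :=
    (norm_sum_le _ _).trans_eq (by simp only [norm_mul])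
  exact (pow_le_pow_left₀ (norm_nonneg _) h 2).trans
    (Finset.sum_mul_sq_le_sq_mul_sq _ _ _)

lemma star_dotProduct_self (v : ι → ℂ) : star v ⬝ᵥ v = ((∑ i, ‖v i‖ ^ 2 : ℝ) : ℂ) := by
  push_cast
  exact Finset.sum_congr rfl fun i _ => conj_mul' (v i)

theorem one_sub_variance_mul_sq_le_norm_sq_sum_exp (p E : ι → ℝ) (hp : ∀ i, 0 ≤ p i)
    (hp1 : ∑ i, p i = 1) (s : ℝ) :
    1 - (∑ i, p i * E i ^ 2 - (∑ i, p i * E i) ^ 2) * s ^ 2 ≤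
      ‖∑ i, (p i : ℂ) * exp (-I * E i * s)‖ ^ 2 := by
  set μ := ∑ i, p i * E i
  set S := ∑ i, (p i : ℂ) * exp (-I * E i * s)
  have hre : (exp ((μ * s : ℝ) * I) * S).re = ∑ i, p i * Real.cos ((μ - E i) * s) := by
    rw [Finset.mul_sum, re_sum]
    refine Finset.sum_congr rfl fun i _ => ?_
    rw [mul_left_comm, ← Complex.exp_add, re_ofReal_mul, ← exp_ofReal_mul_I_re]
    congr 3
    push_cast
    ring
  have hquad : ∑ i, p i * (1 - ((μ - E i) * s) ^ 2 / 2) =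
      1 - (∑ i, p i * E i ^ 2 - μ ^ 2) * s ^ 2 / 2 := by
    have hexp : ∀ i, p i * (1 - ((μ - E i) * s) ^ 2 / 2) =
        p i - s ^ 2 / 2 * (μ ^ 2 * p i - 2 * μ * (p i * E i) + p i * E i ^ 2) := fun i => by ring
    simp only [hexp, Finset.sum_sub_distrib, Finset.sum_add_distrib, ← Finset.mul_sum, hp1]
    ring
  have hlin : 1 - (∑ i, p i * E i ^ 2 - μ ^ 2) * s ^ 2 / 2 ≤ ‖S‖ := calc
    _ = ∑ i, p i * (1 - ((μ - E i) * s) ^ 2 / 2) := hquad.symm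
    _ ≤ ∑ i, p i * Real.cos ((μ - E i) * s) :=
      Finset.sum_le_sum fun i _ => mul_le_mul_of_nonneg_left Real.one_sub_sq_div_two_le_cos (hp i)
    _ = (exp ((μ * s : ℝ) * I) * S).re := hre.symm
    _ ≤ ‖exp ((μ * s : ℝ) * I) * S‖ := re_le_norm _
    _ = ‖S‖ := by rw [norm_mul, norm_exp_ofReal_mul_I, one_mul]
  exact one_sub_le_sq_of_one_sub_half_le hlin

noncomputable def evolvedState (c : ι → ℂ) (E : ι → ℝ) (t : ℝ) : ι → ℂ :=
  fun j => c j * exp (-I * E j * t)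

lemma sum_norm_sq_evolvedState (c : ι → ℂ) (E : ι → ℝ) (t : ℝ) :
    ∑ j, ‖evolvedState c E t j‖ ^ 2 = ∑ j, ‖c j‖ ^ 2 := by
  refine Finset.sum_congr rfl fun j _ => ?_
  rw [evolvedState, norm_mul, norm_exp]
  simp

lemma star_evolvedState_dotProduct (c : ι → ℂ) (E : ι → ℝ) (t t' : ℝ) :
    star (evolvedState c E t) ⬝ᵥ evolvedState c E t' =
      ∑ j, ((‖c j‖ ^ 2 : ℝ) : ℂ) * exp (-I * E j * ((t' - t : ℝ) : ℂ)) := by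
  refine Finset.sum_congr rfl fun j _ => ?_
  simp only [evolvedState, Pi.star_apply, star_mul', RCLike.star_def, ← exp_conj, map_mul,
    map_neg, conj_I, conj_ofReal]
  rw [mul_mul_mul_comm, conj_mul', ← Complex.exp_add]
  push_cast
  ring_nf

theorem one_sub_mul_sq_le_norm_sq_star_evolvedState_dotProduct {c : ι → ℂ} {E : ι → ℝ}
    (hc : ∑ j, ‖c j‖ ^ 2 = 1) {σ : ℝ}
    (hσ : σ ^ 2 = ∑ j, ‖c j‖ ^ 2 * E j ^ 2 - (∑ j, ‖c j‖ ^ 2 * E j) ^ 2) (t t' : ℝ) :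
    1 - σ ^ 2 * (t' - t) ^ 2 ≤ ‖star (evolvedState c E t) ⬝ᵥ evolvedState c E t'‖ ^ 2 := by
  rw [star_evolvedState_dotProduct, hσ]
  exact one_sub_variance_mul_sq_le_norm_sq_sum_exp _ E (fun j => sq_nonneg _) hc _

lemma star_mulVec_dotProduct_of_isHermitian {P : Matrix ι ι ℂ} (hP : P.IsHermitian)
    (u v : ι → ℂ) : star (P *ᵥ u) ⬝ᵥ v = star u ⬝ᵥ (P *ᵥ v) := by
  rw [star_mulVec, hP.eq, dotProduct_mulVec]

lemma trace_mul_vecMulVec_star {P : Matrix ι ι ℂ} (hP : IsIdempotentElem P) (hPh : P.IsHermitian)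
    (v : ι → ℂ) : (P * vecMulVec v (star v)).trace = ((∑ i, ‖(P *ᵥ v) i‖ ^ 2 : ℝ) : ℂ) := by
  rw [mul_vecMulVec, trace_vecMulVec, dotProduct_comm, ← star_dotProduct_self,
    star_mulVec_dotProduct_of_isHermitian hPh, mulVec_mulVec, hP.eq]

theorem norm_sq_star_dotProduct_le_re_trace {P : Matrix ι ι ℂ} (hP : IsIdempotentElem P)
    (hPh : P.IsHermitian) {u : ι → ℂ} (hu : P *ᵥ u = u) (v : ι → ℂ) :
    ‖star u ⬝ᵥ v‖ ^ 2 ≤ (∑ i, ‖u i‖ ^ 2) * ((P * vecMulVec v (star v)).trace).re := by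
  rw [trace_mul_vecMulVec_star hP hPh, ofReal_re]
  calc ‖star u ⬝ᵥ v‖ ^ 2 = ‖star u ⬝ᵥ (P *ᵥ v)‖ ^ 2 := by
        rw [← star_mulVec_dotProduct_of_isHermitian hPh, hu]
    _ ≤ _ := (norm_sum_mul_sq_le (star u) (P *ᵥ v)).trans_eq
        (by simp only [Pi.star_apply, norm_star])

lemma trace_mul_conjTranspose_self {κ : Type*} [Fintype κ] (A : Matrix ι κ ℂ) :
    (A * Aᴴ).trace = ((∑ i, ∑ j, ‖A i j‖ ^ 2 : ℝ) : ℂ) := by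
  push_cast
  refine Finset.sum_congr rfl fun i _ => ?_
  rw [diag_apply, mul_apply]
  exact Finset.sum_congr rfl fun j _ => mul_conj' (A i j)

lemma re_trace_mul_self_of_isHermitian {A : Matrix ι ι ℂ} (hA : A.IsHermitian) :
    ((A * A).trace).re = ∑ i, ∑ j, ‖A i j‖ ^ 2 := by
  conv_lhs => enter [1, 1, 2]; rw [← hA.eq]
  rw [trace_mul_conjTranspose_self, ofReal_re]

lemma norm_trace_mul_sq_le {κ : Type*} [Fintype κ] (A : Matrix ι κ ℂ) (B : Matrix κ ι ℂ) :
    ‖(A * B).trace‖ ^ 2 ≤ (∑ i, ∑ j, ‖A i j‖ ^ 2) * ∑ i, ∑ j, ‖B i j‖ ^ 2 := by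
  have htr : (A * B).trace = ∑ x : ι × κ, A x.1 x.2 * B x.2 x.1 := by
    rw [Fintype.sum_prod_type]
    rfl
  have hA : ∑ x : ι × κ, ‖A x.1 x.2‖ ^ 2 = ∑ i, ∑ j, ‖A i j‖ ^ 2 := Fintype.sum_prod_type _
  have hB : ∑ x : ι × κ, ‖B x.2 x.1‖ ^ 2 = ∑ i, ∑ j, ‖B i j‖ ^ 2 :=
    (Fintype.sum_prod_type _).trans Finset.sum_comm
  rw [htr, ← hA, ← hB]
  exact norm_sum_mul_sq_le _ _

lemma trace_eq_rank_of_isIdempotentElem {K : Type*} [Field K] [DecidableEq ι]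
    {P : Matrix ι ι K} (hP : IsIdempotentElem P) : P.trace = P.rank := by
  obtain ⟨p, hp⟩ := (LinearMap.isProj_iff_isIdempotentElem P.mulVecLin).mpr
    (by rw [IsIdempotentElem, Module.End.mul_eq_comp, ← mulVecLin_mul, hP.eq])
  have hrange : p = LinearMap.range P.mulVecLin :=
    le_antisymm (fun x hx => ⟨x, hp.map_id x hx⟩) (by rintro _ ⟨y, rfl⟩; exact hp.map_mem y)
  have ht := hp.trace
  rw [LinearMap.trace_eq_matrix_trace K (Pi.basisFun K ι), LinearMap.toMatrix_eq_toMatrix',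
    ← Matrix.toLin'_apply', LinearMap.toMatrix'_toLin'] at ht
  rw [ht, hrange]
  rfl

theorem norm_trace_mul_le_sqrt {P ω : Matrix ι ι ℂ} (hP : IsIdempotentElem P)
    (hPh : P.IsHermitian) (hω : ω.IsHermitian) :
    ‖(P * ω).trace‖ ≤ √(P.rank * ((ω * ω).trace).re) := by
  classical
  have hP2 : ∑ i, ∑ j, ‖P i j‖ ^ 2 = P.rank := by
    rw [← re_trace_mul_self_of_isHermitian hPh, hP.eq, trace_eq_rank_of_isIdempotentElem hP]
    rfl
  rw [← hP2, re_trace_mul_self_of_isHermitian hω]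
  exact Real.le_sqrt_of_sq_le (norm_trace_mul_sq_le P ω)

end

lemma isHermitian_of_apply_eq_ite {ι : Type*} {c : ι → ℂ} {E : ι → ℝ} {ω : Matrix ι ι ℂ}
    (hω : ∀ j k, ω j k = if E j = E k then c j * starRingEnd ℂ (c k) else 0) :
    ω.IsHermitian := by
  ext j k
  simp only [conjTranspose_apply, hω, eq_comm (a := E k)]
  split_ifs <;> simp [mul_comm]

theorem stmt_19_general {n : ℕ} (c : Fin n → ℂ) (E : Fin n → ℝ)
    (hnorm : ∑ j, ‖c j‖ ^ 2 = 1)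
    (σE : ℝ) (hσE : 0 < σE)
    (hσ : σE ^ 2 = ∑ j, ‖c j‖ ^ 2 * (E j) ^ 2
        - (∑ j, ‖c j‖ ^ 2 * E j) ^ 2)
    (ε : ℝ) (hε : 0 < ε) (τ : ℝ) (hτ : τ = 2 * ε / σE)
    (K : ℕ)
    (ψ : ℝ → Fin n → ℂ)
    (hψ : ∀ t j, ψ t j = c j * Complex.exp (-Complex.I * (E j : ℂ) * t))
    (ρt : ℝ → Matrix (Fin n) (Fin n) ℂ)
    (hρt : ∀ t, ρt t = Matrix.of fun j k => ψ t j * starRingEnd ℂ (ψ t k))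
    (ω : Matrix (Fin n) (Fin n) ℂ)
    (hω : ∀ j k, ω j k = if E j = E k then c j * starRingEnd ℂ (c k) else 0)
    (deff : ℝ) (hωp : ((ω * ω).trace).re ≤ 1 / deff)
    (P : Matrix (Fin n) (Fin n) ℂ)
    (hP : P * P = P) (hPh : Pᴴ = P) (hrank : P.rank ≤ K)
    (hfix : ∀ j : ℕ, j < K → P *ᵥ ψ (j * τ) = ψ (j * τ)) :
    ∀ t : ℝ, 0 ≤ t → t ≤ ((K : ℝ) - 1 / 2) * τ →
      1 - ε ^ 2 ≤ ((P * ρt t).trace).re ∧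
      1 - ε ^ 2 - Real.sqrt (K / deff) ≤ ‖(P * (ρt t - ω)).trace‖ := by
  intro t ht0 htK
  obtain rfl : ψ = evolvedState c E := funext fun t => funext (hψ t)
  obtain ⟨j, hjK, hj⟩ := exists_nat_lt_abs_sub_mul_le_half (hτ ▸ by positivity) ht0 htK
  have hσs : σE ^ 2 * (t - j * τ) ^ 2 ≤ ε ^ 2 := by
    have : σE * |t - j * τ| ≤ ε := calc
      _ ≤ σE * (τ / 2) := mul_le_mul_of_nonneg_left hj hσE.le
      _ = ε := by rw [hτ]; field_simp
    rw [← sq_abs (t - _), ← mul_pow]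
    exact pow_le_pow_left₀ (by positivity) this 2
  have hPρ : 1 - ε ^ 2 ≤ ((P * ρt t).trace).re := by
    have hsurv := one_sub_mul_sq_le_norm_sq_star_evolvedState_dotProduct hnorm hσ (j * τ) t
    have hproj := norm_sq_star_dotProduct_le_re_trace hP hPh (hfix j hjK) (evolvedState c E t)
    rw [sum_norm_sq_evolvedState, hnorm, one_mul] at hproj
    have hρ : ρt t = vecMulVec (evolvedState c E t) (star (evolvedState c E t)) := hρt t
    rw [hρ]
    linarith
  have hPω : ‖(P * ω).trace‖ ≤ √(K / deff) := by
    have hωH := isHermitian_of_apply_eq_ite hω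
    refine (norm_trace_mul_le_sqrt hP hPh hωH).trans (Real.sqrt_le_sqrt ?_)
    rw [div_eq_mul_one_div]
    exact mul_le_mul (by exact_mod_cast hrank) hωp
      (by rw [re_trace_mul_self_of_isHermitian hωH]; positivity)
      (by positivity)
  refine ⟨hPρ, ?_⟩
  rw [mul_sub, trace_sub]
  linarith [norm_sub_norm_le (P * ρt t).trace (P * ω).trace, re_le_norm (P * ρt t).trace]

/-- Slow equilibration, persistence part: for a pure state |ψ(t)⟩ with energy standard
deviation σ_E and effective dimension d_eff, ε > 0, τ = 2ε/σ_E, and P the projector onto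
span{|ψ(jτ)⟩ : j = 0,…,K−1}, for all t ∈ [0, (K−1/2)τ] one has Tr(Pρ_t) ≥ 1 − ε² and
hence D_P(ρ_t, ω) ≥ 1 − ε² − √(K/d_eff). -/
theorem stmt_19 {n : ℕ} (c : Fin n → ℂ) (E : Fin n → ℝ)
    (hnorm : ∑ j, ‖c j‖ ^ 2 = 1)
    (σE : ℝ) (hσE : 0 < σE)
    (hσ : σE ^ 2 = ∑ j, ‖c j‖ ^ 2 * (E j) ^ 2
        - (∑ j, ‖c j‖ ^ 2 * E j) ^ 2)
    (ε : ℝ) (hε : 0 < ε) (τ : ℝ) (hτ : τ = 2 * ε / σE)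
    (K : ℕ) (hK : 0 < K)
    (ψ : ℝ → Fin n → ℂ)
    (hψ : ∀ t j, ψ t j = c j * Complex.exp (-Complex.I * (E j : ℂ) * t))
    (ρt : ℝ → Matrix (Fin n) (Fin n) ℂ)
    (hρt : ∀ t, ρt t = Matrix.of fun j k => ψ t j * starRingEnd ℂ (ψ t k))
    (ω : Matrix (Fin n) (Fin n) ℂ)
    (hω : ∀ j k, ω j k = if E j = E k then c j * starRingEnd ℂ (c k) else 0)
    (deff : ℝ) (hdeff : 0 < deff) (hωp : ((ω * ω).trace).re ≤ 1 / deff)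
    (P : Matrix (Fin n) (Fin n) ℂ)
    (hP : P * P = P) (hPh : Pᴴ = P) (hrank : P.rank ≤ K)
    (hfix : ∀ j : ℕ, j < K → P *ᵥ ψ (j * τ) = ψ (j * τ)) :
    ∀ t : ℝ, 0 ≤ t → t ≤ ((K : ℝ) - 1 / 2) * τ →
      1 - ε ^ 2 ≤ ((P * ρt t).trace).re ∧
      1 - ε ^ 2 - Real.sqrt (K / deff) ≤ ‖(P * (ρt t - ω)).trace‖ :=
  stmt_19_general c E hnorm σE hσE hσ ε hε τ hτ K ψ hψ ρt hρt ω hω deff hωp P hP hPh hrank hfix
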